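/- Let T be an ℝ^m-valued unbiased estimator at θ (E_θ[T] = θ and the Jacobian ∂_j E_θ[Tⁱ] = δⁱⱼ) for a classical statistical model {p_θ} with nonsingular Fisher information matrix J_θ. Then the covariance matrix of T satisfies V_θ[T] ≥ J_θ⁻¹ in the Löwner order (Cramér–Rao inequality). -/

import Mathlib

/-!
The second-moment matrix of the stacked vector `(T - θ, l)` is a Gram matrix in `L²(P)`, hence
positive semidefinite (this is the Cauchy–Schwarz step). Since the scores are centred, local
unbiasedness makes both off-diagonal blocks the identity, so the Schur complement of the Fisher
block `J` is `V_θ[T] - J⁻¹`, which is therefore positive semidefinite as well.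
-/

open MeasureTheory Matrix
open scoped ComplexOrder

section SchurComplement

variable {n 𝕜 : Type*} [Fintype n] [DecidableEq n] [RCLike 𝕜]

theorem Matrix.PosSemidef.sub_inv_of_fromBlocks_one {V J : Matrix n n 𝕜}
    (h : (fromBlocks V 1 1 J).PosSemidef) (hJ : IsUnit J.det) : (V - J⁻¹).PosSemidef := by
  have hJpsd : J.PosSemidef := h.submatrix Sum.inr
  have hJpd : J.PosDef := hJpsd.posDef_iff_det_ne_zero.mpr hJ.ne_zero
  have := invertibleOfIsUnitDet J hJ
  simpa using (PosDef.fromBlocks₂₂ V 1 hJpd).mp (by simpa using h)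

end SchurComplement

namespace MeasureTheory

variable {Ω ι κ : Type*} [MeasurableSpace Ω] {P : Measure Ω}

noncomputable def crossMoment (P : Measure Ω) (f : ι → Ω → ℝ) (g : κ → Ω → ℝ) : Matrix ι κ ℝ :=
  Matrix.of fun i j => ∫ ω, f i ω * g j ω ∂P

theorem crossMoment_transpose (f : ι → Ω → ℝ) (g : κ → Ω → ℝ) :
    (crossMoment P f g)ᵀ = crossMoment P g f := by
  ext i j
  simp only [crossMoment, transpose_apply, of_apply, mul_comm]

theorem crossMoment_sumElim {ι' κ' : Type*} (f : ι → Ω → ℝ) (f' : ι' → Ω → ℝ)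
    (g : κ → Ω → ℝ) (g' : κ' → Ω → ℝ) :
    crossMoment P (Sum.elim f f') (Sum.elim g g') =
      fromBlocks (crossMoment P f g) (crossMoment P f g')
        (crossMoment P f' g) (crossMoment P f' g') := by
  ext (i | i) (j | j) <;> rfl

theorem posSemidef_crossMoment_self [Fintype ι] {f : ι → Ω → ℝ} (hf : ∀ i, MemLp (f i) 2 P) :
    (crossMoment P f f).PosSemidef := by
  have hgram : gram ℝ (fun i => ((hf i).toLp (f i) : Lp ℝ 2 P)) = crossMoment P f f := by
    ext i j
    rw [gram, of_apply, L2.inner_def, crossMoment, of_apply]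
    refine integral_congr_ae ?_
    filter_upwards [(hf i).coeFn_toLp, (hf j).coeFn_toLp] with ω hi hj
    rw [hi, hj, Real.inner_apply]
  exact hgram ▸ posSemidef_gram ℝ _

end MeasureTheory

theorem cramer_rao_general {Ω : Type*} [MeasurableSpace Ω] (P : Measure Ω)
    [IsProbabilityMeasure P] {m : ℕ} (θ : Fin m → ℝ) (T l : Fin m → Ω → ℝ)
    (hT : ∀ i, MemLp (T i) 2 P) (hl : ∀ i, MemLp (l i) 2 P)
    (hscore0 : ∀ i, ∫ ω, l i ω ∂P = 0)
    (hlocunb : ∀ i j, ∫ ω, T i ω * l j ω ∂P = if i = j then 1 else 0)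
    (J : Matrix (Fin m) (Fin m) ℝ)
    (hJ : J = Matrix.of fun i j => ∫ ω, l i ω * l j ω ∂P)
    (hJinv : IsUnit J.det) :
    ((Matrix.of fun i j => ∫ ω, (T i ω - θ i) * (T j ω - θ j) ∂P) - J⁻¹).PosSemidef := by
  set A : Fin m → Ω → ℝ := fun i ω => T i ω - θ i
  have hA : ∀ i, MemLp (A i) 2 P := fun i => (hT i).sub (memLp_const (θ i))
  have hAl : crossMoment P A l = 1 := by
    ext i j
    have hTl : Integrable (fun ω => T i ω * l j ω) P := (hT i).integrable_mul (hl j)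
    have hlj : Integrable (l j) P := (hl j).integrable one_le_two
    simp only [crossMoment, of_apply, A, sub_mul]
    rw [integral_sub hTl (hlj.const_mul (θ i)), integral_const_mul, hscore0, hlocunb, one_apply]
    ring
  have hblock : (fromBlocks (crossMoment P A A) 1 1 (crossMoment P l l)).PosSemidef := by
    have := posSemidef_crossMoment_self (P := P) (f := Sum.elim A l) (Sum.forall.mpr ⟨hA, hl⟩)
    rwa [crossMoment_sumElim, ← crossMoment_transpose A l, hAl, transpose_one] at this
  subst hJ
  exact hblock.sub_inv_of_fromBlocks_one hJinv

/-- Cramér–Rao inequality: if `T` is locally unbiased at `θ` (mean `θ` and covariance with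
the scores equal to the identity) and the Fisher information matrix `J` is nonsingular,
then `V_θ[T] ≥ J⁻¹` in the Löwner order. -/
theorem cramer_rao {Ω : Type*} [MeasurableSpace Ω] (P : Measure Ω)
    [IsProbabilityMeasure P] {m : ℕ} (θ : Fin m → ℝ) (T l : Fin m → Ω → ℝ)
    (hT : ∀ i, MemLp (T i) 2 P) (hl : ∀ i, MemLp (l i) 2 P)
    (hscore0 : ∀ i, ∫ ω, l i ω ∂P = 0)
    (hunbiased : ∀ i, ∫ ω, T i ω ∂P = θ i)
    (hlocunb : ∀ i j, ∫ ω, T i ω * l j ω ∂P = if i = j then 1 else 0)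
    (J : Matrix (Fin m) (Fin m) ℝ)
    (hJ : J = Matrix.of fun i j => ∫ ω, l i ω * l j ω ∂P)
    (hJinv : IsUnit J.det) :
    ((Matrix.of fun i j => ∫ ω, (T i ω - θ i) * (T j ω - θ j) ∂P) - J⁻¹).PosSemidef :=
  cramer_rao_general P θ T l hT hl hscore0 hlocunb J hJ hJinv
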